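/- arXiv:1902.10055 — 2 statements merged into one kernel-verified Lean document; each statement's English description precedes it below -/
import Mathlib

section
/- With y^max ∈ R^n the greatest point of TP₂ and x* defined by x*_i = Σ_{k≠i} y^max_k, the feasible set {(x,y) ∈ TP₁ × TP₂ : x^T y = x^T y^max} equals the union over all partitions (I, J) of {1,…,n} with I nonempty of the sets TP₁^{IJ} × TP₂^{IJ}, where TP₁^{IJ} = {x ∈ TP₁ : x_j − x*_j < x_i − x*_i for all i ∈ I, j ∈ J, and x_k − x*_k = x_l − x*_l for all k, l ∈ I} and TP₂^{IJ} = {y ∈ TP₂ : max_{i∈I} ((Σ_{k≠i} y^max_k) + y_i) = Σ_k y^max_k}. -/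
open Finset

/-- Tropical (max-plus) scalar product over `R_max = ℝ ∪ {-∞}`,
modelled as `WithBot ℝ`: `x^T y = max_i (x_i + y_i)`. -/
noncomputable def tdot {n : ℕ} (x y : Fin n → WithBot ℝ) : WithBot ℝ :=
  Finset.univ.sup (fun i => x i + y i)

/-- x*_i = Σ_{k ≠ i} y^max_k, as an element of R_max. -/
noncomputable def xstar {n : ℕ} (ymax : Fin n → ℝ) (i : Fin n) : WithBot ℝ :=
  ((∑ k ∈ Finset.univ.erase i, ymax k : ℝ) : WithBot ℝ)

/-! Since `x*_i + y^max_i = Σ_k y^max_k` for every `i`, the differences `x_i - x*_i` are ordered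
like the values `x_i + y^max_i`, so the conditions on `x` say exactly that `I` is the set of indices
where `x + y^max` attains `x^T y^max`. As `y ≤ y^max`, the equality `x^T y = x^T y^max` holds iff
`y_i = y^max_i` at one of these indices, and the condition on `y` says that `y_i = y^max_i` for
some `i ∈ I`. -/

section ShiftByConstants

variable {α : Type*} [AddCommGroup α] [LinearOrder α] [IsOrderedAddMonoid α]
  {a b : WithBot α} {p q r s : α}

theorem WithBot.add_coe_lt_add_coe_iff (h : p + s = q + r) :
    a + (p : WithBot α) < b + q ↔ a + r < b + s := by
  have hs : q + (r - p) = s := by rw [add_sub, ← h, add_sub_cancel_left]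
  rw [← WithBot.add_lt_add_iff_right (WithBot.coe_ne_bot (a := r - p)), add_assoc, add_assoc,
    ← WithBot.coe_add, ← WithBot.coe_add, add_sub_cancel, hs]

theorem WithBot.add_coe_eq_add_coe_iff (h : p + s = q + r) :
    a + (p : WithBot α) = b + q ↔ a + r = b + s := by
  have hs : q + (r - p) = s := by rw [add_sub, ← h, add_sub_cancel_left]
  rw [← WithBot.add_right_inj (WithBot.coe_ne_bot (a := r - p)), add_assoc, add_assoc,
    ← WithBot.coe_add, ← WithBot.coe_add, add_sub_cancel, hs]

end ShiftByConstants

theorem Finset.lt_on_compl_and_const_iff_mem_iff_eq_sup {ι α : Type*} [Fintype ι]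
    [LinearOrder α] [OrderBot α] {f : ι → α} {I : Finset ι} (hI : I.Nonempty) :
    ((∀ i ∈ I, ∀ j ∉ I, f j < f i) ∧ ∀ k ∈ I, ∀ l ∈ I, f k = f l) ↔
      ∀ i, i ∈ I ↔ f i = univ.sup f := by
  constructor
  · rintro ⟨hlt, heq⟩
    obtain ⟨i₀, hi₀⟩ := hI
    have hmax : f i₀ = univ.sup f := by
      refine le_antisymm (le_sup (mem_univ i₀)) (Finset.sup_le fun j _ => ?_)
      by_cases hj : j ∈ I
      · exact (heq j hj i₀ hi₀).le
      · exact (hlt i₀ hi₀ j hj).le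
    refine fun i => ⟨fun hi => heq i hi i₀ hi₀ ▸ hmax, fun hi => ?_⟩
    by_contra hnot
    exact (hlt i₀ hi₀ i hnot).ne (hi.trans hmax.symm)
  · intro hI
    refine ⟨fun i hi j hj => ?_, fun k hk l hl => ((hI k).1 hk).trans ((hI l).1 hl).symm⟩
    rw [(hI i).1 hi]
    exact lt_of_le_of_ne (le_sup (mem_univ j)) (mt (hI j).2 hj)

theorem Finset.sum_univ_erase_add_eq {ι M : Type*} [Fintype ι] [DecidableEq ι] [AddCommMonoid M]
    (f : ι → M) (i j : ι) :
    (∑ k ∈ univ.erase i, f k) + f i = (∑ k ∈ univ.erase j, f k) + f j := by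
  rw [sum_erase_add _ _ (mem_univ i), sum_erase_add _ _ (mem_univ j)]

variable {n : ℕ}

theorem tdot_eq_tdot_coe_iff {x y : Fin n → WithBot ℝ} {z : Fin n → ℝ} (hx : ∃ i, x i ≠ ⊥)
    (hyz : y ≤ fun i => (z i : WithBot ℝ)) :
    tdot x y = tdot x (fun i => (z i : WithBot ℝ)) ↔
      ∃ i, x i + z i = tdot x (fun i => (z i : WithBot ℝ)) ∧ y i = z i := by
  have hle_max : ∀ i, x i + z i ≤ tdot x (fun i => (z i : WithBot ℝ)) := fun i =>
    le_sup (f := fun i => x i + (z i : WithBot ℝ)) (mem_univ i)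
  constructor
  · intro hfeas
    obtain ⟨i₀, hi₀⟩ := hx
    obtain ⟨i, -, hi⟩ := exists_mem_eq_sup univ ⟨i₀, mem_univ i₀⟩ (fun i => x i + y i)
    have hxy : x i + y i = tdot x (fun i => (z i : WithBot ℝ)) := hi.symm.trans hfeas
    have hxz : x i + z i = tdot x (fun i => (z i : WithBot ℝ)) :=
      le_antisymm (hle_max i) (hxy ▸ add_le_add_right (hyz i) _)
    have hxi : x i ≠ ⊥ := by
      intro hbot
      have hi₀_bot : x i₀ + z i₀ ≤ ⊥ := by simpa [← hxz, hbot] using hle_max i₀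
      simp [hi₀] at hi₀_bot
    exact ⟨i, hxz, WithBot.add_left_cancel hxi (hxy.trans hxz.symm)⟩
  · rintro ⟨i, hxz, hyi⟩
    refine le_antisymm (sup_mono_fun fun j _ => add_le_add_right (hyz j) _) ?_
    rw [← hxz, ← hyi]
    exact le_sup (f := fun i => x i + y i) (mem_univ i)

theorem xstar_add_coe (ymax : Fin n → ℝ) (i : Fin n) :
    xstar ymax i + ymax i = ((∑ k, ymax k : ℝ) : WithBot ℝ) := by
  rw [xstar, ← WithBot.coe_add, sum_erase_add _ _ (mem_univ i)]

theorem xstar_cell_iff_argmax {ymax : Fin n → ℝ} {x : Fin n → WithBot ℝ} {I : Finset (Fin n)}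
    (hI : I.Nonempty) :
    ((∀ i ∈ I, ∀ j ∉ I, x j + xstar ymax i < x i + xstar ymax j) ∧
        ∀ k ∈ I, ∀ l ∈ I, x k + xstar ymax l = x l + xstar ymax k) ↔
      ∀ i, i ∈ I ↔ x i + ymax i = tdot x (fun i => (ymax i : WithBot ℝ)) := by
  simp only [xstar, WithBot.add_coe_lt_add_coe_iff (sum_univ_erase_add_eq ymax _ _),
    WithBot.add_coe_eq_add_coe_iff (sum_univ_erase_add_eq ymax _ _)]
  exact lt_on_compl_and_const_iff_mem_iff_eq_sup (f := fun i => x i + (ymax i : WithBot ℝ)) hI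

theorem sup_xstar_add_eq_iff {ymax : Fin n → ℝ} {y : Fin n → WithBot ℝ}
    (hy : y ≤ fun i => (ymax i : WithBot ℝ)) (I : Finset (Fin n)) :
    I.sup (fun i => xstar ymax i + y i) = ((∑ k, ymax k : ℝ) : WithBot ℝ) ↔
      ∃ i ∈ I, y i = ymax i := by
  have hle : ∀ i, xstar ymax i + y i ≤ ((∑ k, ymax k : ℝ) : WithBot ℝ) := fun i =>
    xstar_add_coe ymax i ▸ add_le_add_right (hy i) _
  constructor
  · intro hsup
    rcases I.eq_empty_or_nonempty with rfl | hI
    · exact absurd (sup_empty.symm.trans hsup) WithBot.bot_ne_coe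
    obtain ⟨i, hi, hmax⟩ := exists_mem_eq_sup I hI (fun i => xstar ymax i + y i)
    refine ⟨i, hi, WithBot.add_left_cancel (x := xstar ymax i) WithBot.coe_ne_bot ?_⟩
    rw [← hmax, hsup, xstar_add_coe]
  · rintro ⟨i, hi, hyi⟩
    refine le_antisymm (Finset.sup_le fun j _ => hle j) ?_
    rw [← xstar_add_coe ymax i, ← hyi]
    exact le_sup (f := fun i => xstar ymax i + y i) hi

theorem feasible_set_decomposition_general {n : ℕ} (TP1 TP2 : Set (Fin n → WithBot ℝ))
    (ymax : Fin n → ℝ)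
    (hgreat : ∀ y ∈ TP2, y ≤ fun i => (ymax i : WithBot ℝ))
    (hfin : ∀ x ∈ TP1, ∃ i, x i ≠ ⊥) :
    {p : (Fin n → WithBot ℝ) × (Fin n → WithBot ℝ) |
        p.1 ∈ TP1 ∧ p.2 ∈ TP2 ∧
        tdot p.1 p.2 = tdot p.1 (fun i => (ymax i : WithBot ℝ))} =
      ⋃ (I : Finset (Fin n)) (_ : I.Nonempty),
        ({x ∈ TP1 |
            (∀ i ∈ I, ∀ j ∉ I, x j + xstar ymax i < x i + xstar ymax j) ∧
            (∀ k ∈ I, ∀ l ∈ I, x k + xstar ymax l = x l + xstar ymax k)} ×ˢ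
         {y ∈ TP2 |
            I.sup (fun i => xstar ymax i + y i) = ((∑ k, ymax k : ℝ) : WithBot ℝ)}) := by
  classical
  ext ⟨x, y⟩
  simp only [Set.mem_ofPred_eq, Set.mem_iUnion, Set.mem_prod, exists_prop]
  constructor
  · rintro ⟨hx, hy, hfeas⟩
    obtain ⟨i, hi, hyi⟩ := (tdot_eq_tdot_coe_iff (hfin x hx) (hgreat y hy)).1 hfeas
    set I := univ.filter fun i => x i + ymax i = tdot x (fun i => (ymax i : WithBot ℝ))
    have hiI : i ∈ I := by simpa [I] using hi
    exact ⟨I, ⟨i, hiI⟩, ⟨hx, (xstar_cell_iff_argmax ⟨i, hiI⟩).2 fun j => by simp [I]⟩, hy,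
      (sup_xstar_add_eq_iff (hgreat y hy) I).2 ⟨i, hiI, hyi⟩⟩
  · rintro ⟨I, hI, ⟨hx, hcell⟩, hy, hsup⟩
    obtain ⟨i, hiI, hyi⟩ := (sup_xstar_add_eq_iff (hgreat y hy) I).1 hsup
    exact ⟨hx, hy, (tdot_eq_tdot_coe_iff (hfin x hx) (hgreat y hy)).2
      ⟨i, ((xstar_cell_iff_argmax hI).1 hcell i).1 hiI, hyi⟩⟩

/-- Decomposition of the feasible set of the max-type lower level problem into
cells indexed by the partitions (I, J = Iᶜ) of {1,…,n} with I nonempty. -/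
theorem feasible_set_decomposition {n : ℕ} (TP1 TP2 : Set (Fin n → WithBot ℝ))
    (ymax : Fin n → ℝ)
    (hmem : (fun i => (ymax i : WithBot ℝ)) ∈ TP2)
    (hgreat : ∀ y ∈ TP2, y ≤ fun i => (ymax i : WithBot ℝ))
    (hfin : ∀ x ∈ TP1, ∃ i, x i ≠ ⊥) :
    {p : (Fin n → WithBot ℝ) × (Fin n → WithBot ℝ) |
        p.1 ∈ TP1 ∧ p.2 ∈ TP2 ∧
        tdot p.1 p.2 = tdot p.1 (fun i => (ymax i : WithBot ℝ))} =
      ⋃ (I : Finset (Fin n)) (_ : I.Nonempty),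
        ({x ∈ TP1 |
            (∀ i ∈ I, ∀ j ∉ I, x j + xstar ymax i < x i + xstar ymax j) ∧
            (∀ k ∈ I, ∀ l ∈ I, x k + xstar ymax l = x l + xstar ymax k)} ×ˢ
         {y ∈ TP2 |
            I.sup (fun i => xstar ymax i + y i) = ((∑ k, ymax k : ℝ) : WithBot ℝ)}) :=
  feasible_set_decomposition_general TP1 TP2 ymax hgreat hfin
end

section
/- Let f(x,y) be isotone in its second argument. Then the minimum of f over {(x,y) : x ∈ TP₁, y ∈ TP₂, x^T y ≤ min_{y'∈TP₂} x^T y'} equals the minimum of f over {(x,y) : x ∈ TP₁, y ∈ M(TP₂), x^T y ≤ min_{z ∈ M(TP₂)} x^T z}, where M(TP₂) is the set of minimal points of TP₂, assuming both minima exist and M(TP₂) is a min-essential subset of TP₂ with the property that every y ∈ TP₂ dominates some minimal point. -/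
open Finset

/-- The set of minimal points of a set in R_max^n. -/
def minimalPoints {n : ℕ} (TP : Set (Fin n → WithBot ℝ)) : Set (Fin n → WithBot ℝ) :=
  {m | m ∈ TP ∧ ∀ z ∈ TP, z ≤ m → z = m}

/-!
Every value of the restricted problem is a value of the original one, since a point
minimising `x^T ·` over `M(TP₂)` minimises it over `TP₂` (each point of `TP₂` lies above
one of `M(TP₂)`). Conversely, a feasible `(x, y)` of the original problem can be replaced by
`(x, m)` with `m ≤ y` minimal: `x^T m ≤ x^T y` keeps it lower-level optimal, and `f x m ≤ f x y`.
-/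

theorem tdot_mono_right {n : ℕ} (x : Fin n → WithBot ℝ) : Monotone (tdot x) :=
  fun _ _ h => Finset.sup_mono_fun fun i _ => add_le_add_right (h i) _

theorem minimalPoints_subset {n : ℕ} (TP : Set (Fin n → WithBot ℝ)) :
    minimalPoints TP ⊆ TP :=
  fun _ hm => hm.1

theorem forall_le_iff_of_forall_exists_le {α β : Type*} [Preorder α] [Preorder β]
    {g : α → β} (hg : Monotone g) {s t : Set α} (hts : t ⊆ s)
    (hst : ∀ y ∈ s, ∃ z ∈ t, z ≤ y) (b : β) :
    (∀ y ∈ s, b ≤ g y) ↔ ∀ z ∈ t, b ≤ g z := by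
  refine ⟨fun h z hz => h z (hts hz), fun h y hy => ?_⟩
  obtain ⟨z, hz, hzy⟩ := hst y hy
  exact (h z hz).trans (hg hzy)

theorem IsLeast.eq_of_subset_of_forall_exists_le {α : Type*} [PartialOrder α] {s t : Set α}
    {a b : α} (ha : IsLeast s a) (hb : IsLeast t b) (hts : t ⊆ s)
    (hst : ∀ x ∈ s, ∃ y ∈ t, y ≤ x) : a = b := by
  obtain ⟨y, hy, hya⟩ := hst a ha.1
  exact le_antisymm (hb.mono ha hts) ((hb.2 hy).trans hya)

/-- For f isotone in the second argument, the minimum over the lower-level-optimal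
pairs equals the minimum over the analogous problem restricted to M(TP₂). -/
theorem minmin_restrict_to_minimal {n : ℕ} (TP1 TP2 : Set (Fin n → WithBot ℝ))
    (f : (Fin n → WithBot ℝ) → (Fin n → WithBot ℝ) → ℝ)
    (hiso : ∀ x y1 y2 : Fin n → WithBot ℝ, y1 ≤ y2 → f x y1 ≤ f x y2)
    (hdom : ∀ y ∈ TP2, ∃ m ∈ minimalPoints TP2, m ≤ y)
    (m1 m2 : ℝ)
    (h1 : IsLeast {v : ℝ | ∃ x ∈ TP1, ∃ y ∈ TP2,
        (∀ y' ∈ TP2, tdot x y ≤ tdot x y') ∧ v = f x y} m1)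
    (h2 : IsLeast {v : ℝ | ∃ x ∈ TP1, ∃ y ∈ minimalPoints TP2,
        (∀ z ∈ minimalPoints TP2, tdot x y ≤ tdot x z) ∧ v = f x y} m2) :
    m1 = m2 := by
  refine h1.eq_of_subset_of_forall_exists_le h2 ?_ ?_
  · rintro _ ⟨x, hx, y, hy, hopt, rfl⟩
    have hopt' := (forall_le_iff_of_forall_exists_le (tdot_mono_right x)
      (minimalPoints_subset TP2) hdom (tdot x y)).2 hopt
    exact ⟨x, hx, y, hy.1, hopt', rfl⟩
  · rintro _ ⟨x, hx, y, hy, hopt, rfl⟩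
    obtain ⟨m, hm, hmy⟩ := hdom y hy
    have hopt_m : ∀ z ∈ minimalPoints TP2, tdot x m ≤ tdot x z :=
      fun z hz => (tdot_mono_right x hmy).trans (hopt z hz.1)
    exact ⟨f x m, ⟨x, hx, m, hm, hopt_m, rfl⟩, hiso x m y hmy⟩
end
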